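/- Let X be a real-valued random variable with E e^{tX} < ∞ for some t > 0, and suppose x_max := sup supp(X) < ∞. Then L_X^*(x_max) = −ln P(X = x_max), where −ln 0 := ∞; moreover, lim_{x ↑ x_max} L_X^*(x) (the value u_∞) equals L_X^*(x_max) when P(X = x_max) > 0. -/

import Mathlib

/-! Replacing `X` by `X - c` turns `L_X^*(c)` into `-inf_{t>0} ln E e^{t(X-c)}`. As `X - c ≤ 0`
a.s., `e^{t(X-c)}` tends to the indicator of `{X = c}` as `t → ∞`, dominated by `e^{t₀(X-c)}`,
while it is always at least that indicator; so the infimum is `P(X = c)`. The left limit is a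
property of any Legendre–Fenchel transform: it is monotone, and each `x ↦ t x - L(t)` is
continuous, so already the supremum over `x < c` reaches its value at `c`. -/

open Set MeasureTheory Filter

/-- Legendre–Fenchel transform `L^*(x) = sup_{t>0} [t·x − L(t)]`, with values in `[-∞,∞]`. -/
noncomputable def LF (L : ℝ → EReal) (x : ℝ) : EReal :=
  ⨆ (t : ℝ) (_ : 0 < t), ((t * x : ℝ) : EReal) - L t

/-- Smallest generalized inverse `L^{*←}(u) = inf {x ∈ ℝ : L^*(x) ≥ u}`, with `inf ∅ = ∞`. -/
noncomputable def geInv (L : ℝ → EReal) (u : ℝ) : EReal :=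
  sInf ((fun x : ℝ => (x : EReal)) '' {x : ℝ | (u : EReal) ≤ LF L x})

/-- Largest generalized inverse `L^{*⇐}(u) = inf {x ∈ ℝ : L^*(x) > u}`, with `inf ∅ = ∞`. -/
noncomputable def tgeInv (L : ℝ → EReal) (u : ℝ) : EReal :=
  sInf ((fun x : ℝ => (x : EReal)) '' {x : ℝ | (u : EReal) < LF L x})

/-- Hölder convolution `(L_1 ⊞ ⋯ ⊞ L_n)(t) = inf { Σ_j α_j L_j(t/α_j) : α_j > 0, Σ_j α_j = 1 }`,
with `inf ∅ = ∞`. -/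
noncomputable def hconv (n : ℕ) (L : Fin n → ℝ → EReal) (t : ℝ) : EReal :=
  ⨅ (α : Fin n → ℝ) (_ : (∀ j, 0 < α j) ∧ ∑ j, α j = 1),
    ∑ j, (α j : EReal) * L j (t / α j)

/-- Cramér–Chernoff function `L_X(t) = ln E e^{tX}`, with values in `(-∞,∞]`. -/
noncomputable def cramer {Ω : Type*} [MeasurableSpace Ω] (μ : Measure Ω) (X : Ω → ℝ)
    (t : ℝ) : EReal :=
  ENNReal.log (∫⁻ ω, ENNReal.ofReal (Real.exp (t * X ω)) ∂μ)

open Topology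

theorem LF_mono (L : ℝ → EReal) : Monotone (LF L) := fun _ _ hxy =>
  iSup₂_mono fun _ ht => EReal.sub_le_sub (EReal.coe_le_coe_iff.mpr (by nlinarith)) le_rfl

theorem LF_le_iSup_LF_of_lt (L : ℝ → EReal) (c : ℝ) :
    LF L c ≤ ⨆ (x : ℝ) (_ : x < c), LF L x := by
  refine iSup₂_le fun t ht => ?_
  have hcont : Tendsto (fun x : ℝ => ((t * x : ℝ) : EReal) - L t) (𝓝[<] c)
      (𝓝 (((t * c : ℝ) : EReal) - L t)) := by
    have hadd := EReal.continuousAt_add (p := (((t * c : ℝ) : EReal), -L t))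
      (Or.inl (EReal.coe_ne_top _)) (Or.inl (EReal.coe_ne_bot _))
    have hlin : Continuous fun x : ℝ => (((t * x : ℝ) : EReal), -L t) :=
      (continuous_coe_real_ereal.comp (continuous_const.mul continuous_id)).prodMk continuous_const
    exact (hadd.tendsto.comp (hlin.tendsto c)).mono_left nhdsWithin_le_nhds
  refine le_of_tendsto hcont (eventually_nhdsWithin_of_forall fun x hx => ?_)
  exact le_iSup₂_of_le (f := fun x (_ : x < c) => LF L x) x hx (le_iSup₂_of_le t ht le_rfl)

theorem iSup_LF_of_lt (L : ℝ → EReal) (c : ℝ) :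
    (⨆ (x : ℝ) (_ : x < c), LF L x) = LF L c :=
  le_antisymm (iSup₂_le fun _ hx => LF_mono L hx.le) (LF_le_iSup_LF_of_lt L c)

theorem LF_sub_linear (L : ℝ → EReal) (c x : ℝ) :
    LF (fun t => L t - ((t * c : ℝ) : EReal)) x = LF L (x + c) := by
  refine iSup_congr fun t => iSup_congr fun _ => ?_
  show ((t * x : ℝ) : EReal) - (L t - ((t * c : ℝ) : EReal)) = ((t * (x + c) : ℝ) : EReal) - L t
  generalize L t = a
  induction a using EReal.rec with
  | bot => rw [EReal.bot_sub, EReal.coe_sub_bot, EReal.coe_sub_bot]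
  | coe r => norm_cast; ring
  | top => rw [EReal.top_sub_coe, EReal.sub_top, EReal.sub_top]

theorem LF_zero (L : ℝ → EReal) : LF L 0 = -⨅ (t : ℝ) (_ : 0 < t), L t := by
  simp only [LF, mul_zero, EReal.coe_zero, zero_sub]
  exact (EReal.negOrderIso.map_iInf₂ _).symm

section

variable {Ω : Type*} [MeasurableSpace Ω]

theorem lintegral_exp_mul_sub_const (μ : Measure Ω) (X : Ω → ℝ) (c t : ℝ) :
    ∫⁻ ω, ENNReal.ofReal (Real.exp (t * (X ω - c))) ∂μ =
      (∫⁻ ω, ENNReal.ofReal (Real.exp (t * X ω)) ∂μ) * ENNReal.ofReal (Real.exp (-(t * c))) := by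
  simp_rw [mul_sub, sub_eq_add_neg, Real.exp_add, ENNReal.ofReal_mul (Real.exp_pos _).le]
  exact lintegral_mul_const' _ _ ENNReal.ofReal_ne_top

theorem cramer_sub_const (μ : Measure Ω) (X : Ω → ℝ) (c t : ℝ) :
    cramer μ (fun ω => X ω - c) t = cramer μ X t - ((t * c : ℝ) : EReal) := by
  rw [cramer, cramer, lintegral_exp_mul_sub_const, ENNReal.log_mul_add,
    ENNReal.log_ofReal_of_pos (Real.exp_pos _), Real.log_exp, EReal.coe_neg, sub_eq_add_neg]

theorem tendsto_ofReal_exp_mul_atTop_of_nonpos {y : ℝ} (hy : y ≤ 0) :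
    Tendsto (fun t : ℝ => ENNReal.ofReal (Real.exp (t * y))) atTop
      (𝓝 (({0} : Set ℝ).indicator 1 y)) := by
  rcases hy.lt_or_eq with hy | rfl
  · rw [indicator_of_notMem (notMem_singleton_iff.mpr hy.ne), ← ENNReal.ofReal_zero]
    exact ENNReal.tendsto_ofReal
      (Real.tendsto_exp_atBot.comp (tendsto_id.atTop_mul_const_of_neg hy))
  · simp

theorem iInf_lintegral_exp_mul_of_ae_nonpos {μ : Measure Ω} {Y : Ω → ℝ} (hY : Measurable Y)
    (hY0 : ∀ᵐ ω ∂μ, Y ω ≤ 0)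
    (hfin : ∃ t : ℝ, 0 < t ∧ ∫⁻ ω, ENNReal.ofReal (Real.exp (t * Y ω)) ∂μ ≠ ⊤) :
    ⨅ (t : ℝ) (_ : 0 < t), ∫⁻ ω, ENNReal.ofReal (Real.exp (t * Y ω)) ∂μ = μ (Y ⁻¹' {0}) := by
  obtain ⟨t₀, ht₀, hfin⟩ := hfin
  have hind : ∀ ω, (Y ⁻¹' {0}).indicator 1 ω = ({0} : Set ℝ).indicator 1 (Y ω) := fun ω =>
    indicator_comp_right (g := (1 : ℝ → ENNReal)) Y
  rw [← lintegral_indicator_one (hY (measurableSet_singleton 0))]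
  refine le_antisymm ?_ (le_iInf₂ fun t _ => lintegral_mono fun ω => ?_)
  · have hlim := tendsto_lintegral_filter_of_dominated_convergence (l := atTop) (μ := μ)
      (F := fun (t : ℝ) ω => ENNReal.ofReal (Real.exp (t * Y ω)))
      (fun ω => ENNReal.ofReal (Real.exp (t₀ * Y ω)))
      (Eventually.of_forall fun t => by fun_prop)
      ((eventually_ge_atTop t₀).mono fun t ht => hY0.mono fun ω hω =>
        ENNReal.ofReal_le_ofReal (Real.exp_le_exp.mpr (by nlinarith)))
      hfin
      (hY0.mono fun ω hω => (hind ω).symm ▸ tendsto_ofReal_exp_mul_atTop_of_nonpos hω)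
    exact ge_of_tendsto hlim ((eventually_gt_atTop 0).mono fun t ht => iInf₂_le t ht)
  · rw [hind]
    by_cases hω : Y ω = 0 <;> simp [hω]

end

theorem LF_cramer_at_essSup_general (Ω : Type*) [MeasurableSpace Ω] (μ : Measure Ω)
    (X : Ω → ℝ) (hX : Measurable X)
    (hfin : ∃ t : ℝ, 0 < t ∧ ∫⁻ ω, ENNReal.ofReal (Real.exp (t * X ω)) ∂μ ≠ ⊤)
    (c : ℝ) (hc : essSup (fun ω => (X ω : EReal)) μ = (c : EReal)) :
    LF (cramer μ X) c = -(ENNReal.log (μ {ω | X ω = c})) ∧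
      (0 < μ {ω | X ω = c} →
        (⨆ (x : ℝ) (_ : x < c), LF (cramer μ X) x) = LF (cramer μ X) c) := by
  refine ⟨?_, fun _ => iSup_LF_of_lt _ c⟩
  have hle : ∀ᵐ ω ∂μ, X ω - c ≤ 0 := by
    filter_upwards [hc ▸ ae_le_essSup (f := fun ω => (X ω : EReal)) (μ := μ)] with ω hω
    exact sub_nonpos.mpr (EReal.coe_le_coe_iff.mp hω)
  have hfin' : ∃ t : ℝ, 0 < t ∧ ∫⁻ ω, ENNReal.ofReal (Real.exp (t * (X ω - c))) ∂μ ≠ ⊤ := by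
    obtain ⟨t, ht, hIt⟩ := hfin
    exact ⟨t, ht,
      lintegral_exp_mul_sub_const μ X c t ▸ ENNReal.mul_ne_top hIt ENNReal.ofReal_ne_top⟩
  have hset : (fun ω => X ω - c) ⁻¹' {0} = {ω | X ω = c} := by ext; simp [sub_eq_zero]
  calc LF (cramer μ X) c = LF (cramer μ fun ω => X ω - c) 0 := by
        rw [funext (cramer_sub_const μ X c), LF_sub_linear, zero_add]
    _ = -ENNReal.log (⨅ (t : ℝ) (_ : 0 < t),
          ∫⁻ ω, ENNReal.ofReal (Real.exp (t * (X ω - c))) ∂μ) := by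
        rw [LF_zero, ← ENNReal.logOrderIso_apply, ENNReal.logOrderIso.map_iInf₂]; rfl
    _ = -ENNReal.log (μ {ω | X ω = c}) := by
        rw [iInf_lintegral_exp_mul_of_ae_nonpos (hX.sub_const c) hle hfin', hset]

/-- Lemma, second part. If `x_max = ess sup X < ∞` (so `x_max = c` for
a real `c`), then `L_X^*(x_max) = -ln P(X = x_max)` (with `-ln 0 = ∞`); moreover, when
`P(X = x_max) > 0`, the left limit `u_∞ = lim_{x↑x_max} L_X^*(x)` (the supremum of the
nondecreasing function `L_X^*` over `x < x_max`) equals `L_X^*(x_max)`. -/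
theorem LF_cramer_at_essSup (Ω : Type*) [MeasurableSpace Ω] (μ : Measure Ω)
    [IsProbabilityMeasure μ] (X : Ω → ℝ) (hX : Measurable X)
    (hfin : ∃ t : ℝ, 0 < t ∧ ∫⁻ ω, ENNReal.ofReal (Real.exp (t * X ω)) ∂μ ≠ ⊤)
    (c : ℝ) (hc : essSup (fun ω => (X ω : EReal)) μ = (c : EReal)) :
    LF (cramer μ X) c = -(ENNReal.log (μ {ω | X ω = c})) ∧
      (0 < μ {ω | X ω = c} →
        (⨆ (x : ℝ) (_ : x < c), LF (cramer μ X) x) = LF (cramer μ X) c) :=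
  LF_cramer_at_essSup_general Ω μ X hX hfin c hc
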